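/- Let ν be an absolutely continuous probability measure on ℝ with density f bounded below by L > 0 on a neighborhood of radius r around each of the quantiles ξ_{q₁},…,ξ_{qₘ} (0 < q₁ < ⋯ < qₘ < 1). Define for a ≤ x₁ < ⋯ < xₘ ≤ b (with x₀ = -∞, x_{m+1} = +∞, q₀ = 0, q_{m+1} = 1) the utility gap α(t) = inf over such x with ‖x - ξ_q‖₂ ≥ t of Σ_{j=1}^{m+1} |q_j - q_{j-1} - F(x_j) + F(x_{j-1})|. Then for 0 ≤ t ≤ r, α(t) ≥ tL/√m. -/

import Mathlib

open MeasureTheory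

lemma Faux_mono (f : ℝ → ℝ) (h0 : ∀ x, 0 ≤ f x) (hi : Integrable f) {y z : ℝ} (h : y ≤ z) :
    ∫ s in Set.Iic y, f s ≤ ∫ s in Set.Iic z, f s :=
  setIntegral_mono_set hi.integrableOn (Filter.Eventually.of_forall h0)
    ((Set.Iic_subset_Iic.2 h).eventuallyLE)

lemma Faux_incr (f : ℝ → ℝ) (h0 : ∀ x, 0 ≤ f x) (hi : Integrable f)
    {L y z : ℝ} (hyz : y ≤ z) (hLf : ∀ w ∈ Set.Ioc y z, L ≤ f w) :
    L * (z - y) + ∫ s in Set.Iic y, f s ≤ ∫ s in Set.Iic z, f s := by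
  have hsplit : ∫ s in Set.Iic z, f s
      = (∫ s in Set.Iic y, f s) + ∫ s in Set.Ioc y z, f s := by
    rw [← setIntegral_union (Set.Iic_disjoint_Ioc le_rfl) measurableSet_Ioc
      hi.integrableOn hi.integrableOn, Set.Iic_union_Ioc_eq_Iic hyz]
  have hconst : ∫ _s in Set.Ioc y z, L ∂volume = L * (z - y) := by
    rw [setIntegral_const, measureReal_def, Real.volume_Ioc, ENNReal.toReal_ofReal (by linarith), smul_eq_mul,
      mul_comm]
  have hmono : ∫ _s in Set.Ioc y z, L ∂volume ≤ ∫ s in Set.Ioc y z, f s := by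
    apply setIntegral_mono_on
    · exact integrableOn_const measure_Ioc_lt_top.ne
    · exact hi.integrableOn
    · exact measurableSet_Ioc
    · exact hLf
  rw [hsplit]
  linarith [hconst ▸ hmono]

lemma Faux_tendsto_top (f : ℝ → ℝ) (hi : Integrable f) :
    Filter.Tendsto (fun n : ℕ => ∫ s in Set.Iic (n : ℝ), f s) Filter.atTop
      (nhds (∫ x, f x)) := by
  have hU : (⋃ n : ℕ, Set.Iic (n : ℝ)) = Set.univ := by
    ext w
    simp only [Set.mem_iUnion, Set.mem_Iic, Set.mem_univ, iff_true]
    exact exists_nat_ge w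
  have := tendsto_setIntegral_of_monotone (s := fun n : ℕ => Set.Iic (n : ℝ))
    (fun _ => measurableSet_Iic)
    (fun i j hij => Set.Iic_subset_Iic.2 (by exact_mod_cast hij))
    (by rw [hU]; exact hi.integrableOn)
  rwa [hU, setIntegral_univ] at this

lemma Faux_tendsto_bot (f : ℝ → ℝ) (hi : Integrable f) :
    Filter.Tendsto (fun n : ℕ => ∫ s in Set.Ioi (-(n : ℝ)), f s) Filter.atTop
      (nhds (∫ x, f x)) := by
  have hU : (⋃ n : ℕ, Set.Ioi (-(n : ℝ))) = Set.univ := by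
    ext w
    simp only [Set.mem_iUnion, Set.mem_Ioi, Set.mem_univ, iff_true]
    obtain ⟨n, hn⟩ := exists_nat_gt (-w)
    exact ⟨n, by linarith⟩
  have := tendsto_setIntegral_of_monotone (s := fun n : ℕ => Set.Ioi (-(n : ℝ)))
    (fun _ => measurableSet_Ioi)
    (fun i j hij => Set.Ioi_subset_Ioi (by exact_mod_cast neg_le_neg (Nat.cast_le.2 hij)))
    (by rw [hU]; exact hi.integrableOn)
  rwa [hU, setIntegral_univ] at this

lemma Faux_quantile_bound (f : ℝ → ℝ) (h0 : ∀ x, 0 ≤ f x) (hi : Integrable f)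
    (hprob : (∫ x, f x) = 1)
    (F : ℝ → ℝ) (hF : ∀ x, F x = ∫ s in Set.Iic x, f s)
    (p : ℝ) (hp0 : 0 < p) (hp1 : p < 1)
    (ξ : ℝ) (hξ : ξ = sInf {y : ℝ | p ≤ F y})
    (L r : ℝ) (hL : 0 < L) (hdens : ∀ y, |y - ξ| ≤ r → L ≤ f y)
    (δ : ℝ) (hδ0 : 0 < δ) (hδr : δ ≤ r)
    (z : ℝ) (hz : δ ≤ |z - ξ|) :
    L * δ ≤ |p - F z| := by
  have hr : 0 < r := lt_of_lt_of_le hδ0 hδr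
  set S : Set ℝ := {y : ℝ | p ≤ F y} with hS
  have hmono : ∀ {y w : ℝ}, y ≤ w → F y ≤ F w := by
    intro y w h
    rw [hF, hF]; exact Faux_mono f h0 hi h
  -- S is nonempty
  have hS_ne : S.Nonempty := by
    have h1 := Faux_tendsto_top f hi
    rw [hprob] at h1
    obtain ⟨n, hn⟩ := (h1.eventually (eventually_gt_nhds hp1)).exists
    exact ⟨(n : ℝ), by simp only [hS, Set.mem_setOf_eq, hF]; exact le_of_lt hn⟩
  -- S is bounded below
  have hS_bdd : BddBelow S := by
    have h1 := Faux_tendsto_bot f hi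
    rw [hprob] at h1
    obtain ⟨n, hn⟩ := (h1.eventually (eventually_gt_nhds (by linarith : (1:ℝ) - p < 1))).exists
    refine ⟨-(n : ℝ), fun y hy => ?_⟩
    by_contra hlt
    push_neg at hlt
    have hsplit : F (-(n:ℝ)) + ∫ s in Set.Ioi (-(n:ℝ)), f s = 1 := by
      rw [hF, ← setIntegral_union (Set.Iic_disjoint_Ioi le_rfl) measurableSet_Ioi
        hi.integrableOn hi.integrableOn, Set.Iic_union_Ioi, setIntegral_univ, hprob]
    have h2 : F (-(n:ℝ)) < p := by linarith
    have h3 : F y ≤ F (-(n:ℝ)) := hmono (le_of_lt hlt)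
    have h4 : p ≤ F y := hy
    linarith
  have hξ_inf : ξ = sInf S := hξ
  -- fact1 : ∀ ε > 0, p ≤ F (ξ + ε)
  have fact1 : ∀ ε : ℝ, 0 < ε → p ≤ F (ξ + ε) := by
    intro ε hε
    obtain ⟨y, hyS, hylt⟩ := exists_lt_of_csInf_lt hS_ne
      (show sInf S < ξ + ε by rw [← hξ_inf]; linarith)
    exact le_trans hyS (hmono (le_of_lt hylt))
  -- fact2 : ∀ y < ξ, F y < p
  have fact2 : ∀ y : ℝ, y < ξ → F y < p := by
    intro y hy
    by_contra h
    push_neg at h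
    have : ξ ≤ y := hξ_inf ▸ csInf_le hS_bdd h
    linarith
  rcases le_abs.1 hz with hup | hdown
  · -- z ≥ ξ + δ : show p + L*δ ≤ F z
    have key : p + L * δ ≤ F z := by
      apply le_of_forall_pos_le_add
      intro η hη
      set e := min (η / L) δ with he
      have he0 : 0 < e := lt_min (div_pos hη hL) hδ0
      have heδ : e ≤ δ := min_le_right _ _
      have hLe : L * e ≤ η := by
        calc L * e ≤ L * (η / L) := by
              exact mul_le_mul_of_nonneg_left (min_le_left _ _) (le_of_lt hL)
          _ = η := by field_simp
      have hstep : L * (δ - e) + F (ξ + e) ≤ F (ξ + δ) := by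
        rw [hF (ξ + e), hF (ξ + δ)]
        have : L * ((ξ + δ) - (ξ + e)) + ∫ s in Set.Iic (ξ + e), f s
            ≤ ∫ s in Set.Iic (ξ + δ), f s := by
          apply Faux_incr f h0 hi (by linarith)
          intro w hw
          apply hdens
          simp only [Set.mem_Ioc] at hw
          rw [abs_le]
          exact ⟨by linarith [hw.1], by linarith [hw.2]⟩
        linarith [this]
      have hmz : F (ξ + δ) ≤ F z := hmono (by linarith)
      have hp' := fact1 e he0
      linarith
    have : F z - p ≤ |p - F z| := by rw [abs_sub_comm]; exact le_abs_self _
    linarith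
  · -- z ≤ ξ - δ : show F z + L*δ ≤ p
    have key : F z + L * δ ≤ p := by
      apply le_of_forall_pos_le_add
      intro η hη
      set e := min (η / L) δ with he
      have he0 : 0 < e := lt_min (div_pos hη hL) hδ0
      have heδ : e ≤ δ := min_le_right _ _
      have hLe : L * e ≤ η := by
        calc L * e ≤ L * (η / L) :=
              mul_le_mul_of_nonneg_left (min_le_left _ _) (le_of_lt hL)
          _ = η := by field_simp
      have hstep : L * (δ - e) + F (ξ - δ) ≤ F (ξ - e) := by
        rw [hF (ξ - δ), hF (ξ - e)]
        have : L * ((ξ - e) - (ξ - δ)) + ∫ s in Set.Iic (ξ - δ), f s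
            ≤ ∫ s in Set.Iic (ξ - e), f s := by
          apply Faux_incr f h0 hi (by linarith)
          intro w hw
          apply hdens
          simp only [Set.mem_Ioc] at hw
          rw [abs_le]
          exact ⟨by linarith [hw.1], by linarith [hw.2]⟩
        linarith [this]
      have hmz : F z ≤ F (ξ - δ) := hmono (by linarith)
      have hp' : F (ξ - e) < p := fact2 _ (by linarith)
      linarith
    have : p - F z ≤ |p - F z| := le_abs_self _
    linarith

open MeasureTheory Finset

/-- Utility-gap lower bound for `JointExp`. Let `ν` be an absolutely continuous probability
measure on `ℝ` with density `f` bounded below by `L > 0` on a radius-`r` neighborhood of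
each quantile `ξ_{qᵢ}` (`0 < q₁ < ⋯ < qₘ < 1`). Then for any `0 ≤ t ≤ r` and any
`a ≤ x₁ < ⋯ < xₘ ≤ b` with `‖x - ξ_q‖₂ ≥ t`, the utility sum (with the conventions
`x₀ = -∞`, `x_{m+1} = +∞`, `F(-∞) = q₀ = 0`, `F(+∞) = q_{m+1} = 1`) satisfies
`Σ_{j=1}^{m+1} |q_j - q_{j-1} - F(x_j) + F(x_{j-1})| ≥ t·L/√m`; hence `α(t) ≥ t·L/√m`. -/
theorem jointexp_utility_gap_lower_bound
    (m : ℕ) (hm : 1 ≤ m)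
    (f : ℝ → ℝ) (hf_nonneg : ∀ x, 0 ≤ f x) (hf_int : Integrable f)
    (hf_prob : (∫ x, f x) = 1)
    (F : ℝ → ℝ) (hF : ∀ x, F x = ∫ s in Set.Iic x, f s)
    (q : ℕ → ℝ)
    (hq0 : ∀ i ∈ Finset.Icc 1 m, 0 < q i) (hq1 : ∀ i ∈ Finset.Icc 1 m, q i < 1)
    (hqmono : ∀ i j, 1 ≤ i → i < j → j ≤ m → q i < q j)
    (ξ : ℕ → ℝ) (hξ : ∀ i ∈ Finset.Icc 1 m, ξ i = sInf {y : ℝ | q i ≤ F y})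
    (L r : ℝ) (hL : 0 < L) (hr : 0 < r)
    (hdens : ∀ i ∈ Finset.Icc 1 m, ∀ y, |y - ξ i| ≤ r → L ≤ f y)
    (t : ℝ) (ht0 : 0 ≤ t) (htr : t ≤ r)
    (a b : ℝ) (x : ℕ → ℝ)
    (hax : ∀ i ∈ Finset.Icc 1 m, a ≤ x i) (hxb : ∀ i ∈ Finset.Icc 1 m, x i ≤ b)
    (hxmono : ∀ i j, 1 ≤ i → i < j → j ≤ m → x i < x j)
    (hfar : t ≤ Real.sqrt (∑ i ∈ Finset.Icc 1 m, (x i - ξ i) ^ 2)) :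
    t * L / Real.sqrt m ≤
      ∑ j ∈ Finset.range (m + 1),
        |(if j + 1 ≤ m then q (j + 1) else 1) - (if j = 0 then 0 else q j) -
          ((if j + 1 ≤ m then F (x (j + 1)) else 1) - (if j = 0 then 0 else F (x j)))| := by
  set T : ℕ → ℝ := fun j =>
    (if j + 1 ≤ m then q (j + 1) else 1) - (if j = 0 then 0 else q j) -
      ((if j + 1 ≤ m then F (x (j + 1)) else 1) - (if j = 0 then 0 else F (x j))) with hT
  rcases eq_or_lt_of_le ht0 with htz | htpos
  · rw [← htz]
    simp only [zero_mul, zero_div]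
    exact Finset.sum_nonneg fun j _ => abs_nonneg _
  -- t > 0
  have hm' : (1 : ℝ) ≤ (m : ℝ) := by exact_mod_cast hm
  have hsm1 : 1 ≤ Real.sqrt m := Real.one_le_sqrt.2 hm'
  have hsm0 : 0 < Real.sqrt m := lt_of_lt_of_le one_pos hsm1
  set δ : ℝ := t / Real.sqrt m with hδ
  have hδ0 : 0 < δ := div_pos htpos hsm0
  have hδt : δ ≤ t := div_le_self ht0 hsm1
  have hδr : δ ≤ r := le_trans hδt htr
  -- choose the maximizing index k
  obtain ⟨k, hkmem, hkmax⟩ := Finset.exists_max_image (Finset.Icc 1 m)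
    (fun i => (x i - ξ i) ^ 2) ⟨1, Finset.mem_Icc.2 ⟨le_refl 1, hm⟩⟩
  obtain ⟨hk1, hkm⟩ := Finset.mem_Icc.1 hkmem
  have hsum_le : ∑ i ∈ Finset.Icc 1 m, (x i - ξ i) ^ 2 ≤ (m : ℝ) * (x k - ξ k) ^ 2 := by
    calc ∑ i ∈ Finset.Icc 1 m, (x i - ξ i) ^ 2
        ≤ ∑ _i ∈ Finset.Icc 1 m, (x k - ξ k) ^ 2 := Finset.sum_le_sum hkmax
      _ = ((Finset.Icc 1 m).card : ℝ) * (x k - ξ k) ^ 2 := by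
          rw [Finset.sum_const, nsmul_eq_mul]
      _ = (m : ℝ) * (x k - ξ k) ^ 2 := by
          rw [Nat.card_Icc]; norm_num
  have hzk : δ ≤ |x k - ξ k| := by
    have h1 : t ≤ Real.sqrt ((m : ℝ) * (x k - ξ k) ^ 2) :=
      le_trans hfar (Real.sqrt_le_sqrt hsum_le)
    have h2 : Real.sqrt ((m : ℝ) * (x k - ξ k) ^ 2)
        = Real.sqrt m * |x k - ξ k| := by
      rw [Real.sqrt_mul (by positivity), Real.sqrt_sq_eq_abs]
    rw [hδ, div_le_iff₀ hsm0]
    rw [h2, mul_comm] at h1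
    exact h1
  -- the key quantile bound at k
  have hkey : L * δ ≤ |q k - F (x k)| :=
    Faux_quantile_bound f hf_nonneg hf_int hf_prob F hF (q k) (hq0 k hkmem) (hq1 k hkmem)
      (ξ k) (hξ k hkmem) L r hL (fun y hy => hdens k hkmem y hy) δ hδ0 hδr (x k) hzk
  -- telescoping
  set g : ℕ → ℝ := fun j => if j = 0 then 0 else q j - F (x j) with hg
  have htel : ∑ j ∈ Finset.range k, T j = q k - F (x k) := by
    have hTg : ∀ j ∈ Finset.range k, T j = g (j + 1) - g j := by
      intro j hj
      have hjk : j < k := Finset.mem_range.1 hj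
      have hj1m : j + 1 ≤ m := le_trans (Nat.succ_le_of_lt hjk) hkm
      simp only [hT, hg, if_pos hj1m, Nat.succ_ne_zero, if_neg (Nat.succ_ne_zero j)]
      by_cases hj0 : j = 0 <;> simp [hj0] <;> ring
    rw [Finset.sum_congr rfl hTg, Finset.sum_range_sub g k]
    have hk0 : k ≠ 0 := Nat.one_le_iff_ne_zero.1 hk1
    simp [hg, hk0]
  calc t * L / Real.sqrt m = L * δ := by rw [hδ]; ring
    _ ≤ |q k - F (x k)| := hkey
    _ = |∑ j ∈ Finset.range k, T j| := by rw [htel]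
    _ ≤ ∑ j ∈ Finset.range k, |T j| := Finset.abs_sum_le_sum_abs T _
    _ ≤ ∑ j ∈ Finset.range (m + 1), |T j| :=
        Finset.sum_le_sum_of_subset_of_nonneg
          (Finset.range_subset_range.2 (by omega)) (fun j _ _ => abs_nonneg _)
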